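/- (Algebraic form of Theorem 4 on Σ^{i,j}(−i+1).) Let 1 ≤ j ≤ i and let δ = (j, j−1, …, 2, 1) be the staircase partition, with |δ| = j(j+1)/2. Then in ℚ[x_1,…,x_i,t] one has the identity 2^j · s_δ(t/2 − x_1, …, t/2 − x_i) = ∑_{μ ⊆ δ} 2^{|μ| − j(j−1)/2} · E_{δ/μ}(i) · t^{|δ|−|μ|} · (−1)^{|μ|} · s_μ(x_1,…,x_i), where the sum is over all partitions μ contained in δ. (This is the expansion of 2^j s_δ(A*⊗√L) in terms of the Chern roots x_1,…,x_i of A and c_1(L) = t, whose coefficients are the coefficients in the Thom polynomial of Σ^{i,j}(−i+1).) -/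

import Mathlib

/-!
Substituting `x_a ↦ t/2 − x_a` multiplies the Vandermonde product by `(−1)^{n(n−1)/2}` and turns
the bialternant numerator of `s_δ` into `det[(y_a + c)^{m_b}]` with `y_a = −x_a`, `c = t/2` and
`m_b = δ_b + n − 1 − b`. Expanding each entry binomially factors this matrix as `Y · B` with
`Y_{a,p} = y_a^p` and `B_{p,b} = C(m_b, p) c^{m_b − p}`, so Cauchy–Binet sums over the strictly
decreasing exponent sequences `q_l = μ_l + n − 1 − l`. The minor of `Y` is the bialternant
numerator of `s_μ(−x) = (−1)^{|μ|} s_μ(x)`, the minor of `B` is `c^{|δ|−|μ|} E_{δ/μ}(n)`, and the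
latter vanishes unless `μ ⊆ δ`, because then its matrix has a zero block too large for any
permutation to avoid.
-/

open Finset MvPolynomial

/-- `E_{λ/μ}(n) = det[ C(λ_k + n − k, μ_l + n − l) ]_{1≤k,l≤n}` (indices written 0-based). -/
def Edet (n : ℕ) (lam mu : ℕ → ℕ) : ℤ :=
  (Matrix.of fun k l : Fin n =>
    ((lam k + (n - 1 - (k : ℕ))).choose (mu l + (n - 1 - (l : ℕ))) : ℤ)).det

/-- Extension of a bounded tuple to a function `ℕ → ℕ` (zero beyond the box). -/
def extF {n : ℕ} {m : Fin n → ℕ} (f : (k : Fin n) → Fin (m k + 1)) : ℕ → ℕ :=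
  fun k => if h : k < n then (f ⟨k, h⟩ : ℕ) else 0

section General

variable {ι : Type*} [LinearOrder ι] [Fintype ι] {n : ℕ}

theorem Finset.sum_injective_eq_sum_strictMono_perm {M : Type*} [AddCommMonoid M]
    (f : (Fin n → ι) → M) :
    ∑ r : Fin n → ι with Function.Injective r, f r
      = ∑ s : Fin n → ι with StrictMono s, ∑ σ : Equiv.Perm (Fin n), f (s ∘ σ) := by
  rw [← sum_product']
  symm
  refine sum_bij (fun p _ => p.1 ∘ p.2) (fun p hp => ?_) (fun p hp q hq hpq => ?_)
    (fun r hr => ?_) (fun _ _ => rfl)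
  · simp only [mem_filter, mem_product, mem_univ, true_and, and_true] at hp ⊢
    exact hp.injective.comp p.2.injective
  · simp only [mem_filter, mem_product, mem_univ, true_and, and_true] at hp hq
    have hs : p.1 = q.1 := by
      rw [← hp.range_inj hq, ← EquivLike.range_comp p.1 p.2, ← EquivLike.range_comp q.1 q.2]
      exact congrArg Set.range hpq
    exact Prod.ext hs (Equiv.ext fun b => hq.injective (by simpa [hs] using congrFun hpq b))
  · simp only [mem_filter, mem_univ, true_and] at hr
    refine ⟨(r ∘ Tuple.sort r, (Tuple.sort r).symm), ?_, ?_⟩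
    · simp only [mem_filter, mem_product, mem_univ, true_and, and_true]
      exact (Tuple.monotone_sort r).strictMono_of_injective (hr.comp (Tuple.sort r).injective)
    · ext b
      simp

variable {R : Type*} [CommRing R]

theorem Finset.prod_choose_mul_pow_sub (m r : Fin n → ℕ) (c : R) :
    ∏ b, ((m b).choose (r b) * c ^ (m b - r b) : R)
      = (∏ b, ((m b).choose (r b) : R)) * c ^ (∑ b, m b - ∑ b, r b) := by
  by_cases hr : ∀ b, r b ≤ m b
  · rw [prod_mul_distrib, prod_pow_eq_pow_sum, sum_tsub_distrib _ fun b _ => hr b]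
  · obtain ⟨b, hb⟩ := not_forall.mp hr
    have hzero : ((m b).choose (r b) : R) = 0 := by
      rw [Nat.choose_eq_zero_of_lt (not_le.mp hb), Nat.cast_zero]
    rw [prod_eq_zero (mem_univ b) (by rw [hzero, zero_mul]),
      prod_eq_zero (mem_univ b) hzero, zero_mul]

theorem add_pow_eq_sum_fin (x c : R) {m N : ℕ} (hm : m < N) :
    (x + c) ^ m = ∑ p : Fin N, x ^ (p : ℕ) * ((m.choose p : R) * c ^ (m - p)) := by
  rw [add_pow, Fin.sum_univ_eq_sum_range (fun p => x ^ p * ((m.choose p : R) * c ^ (m - p)))]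
  refine sum_subset (range_subset_range.mpr hm) (fun p _ hp => ?_) |>.trans
    (sum_congr rfl fun p _ => by ring)
  rw [Nat.choose_eq_zero_of_lt (by simpa using hp), Nat.cast_zero, mul_zero]

end General

namespace Matrix

variable {R : Type*} [CommRing R]

theorem det_mul_eq_sum_prod_mul_det_submatrix {m ι : Type*} [Fintype m] [DecidableEq m]
    [Fintype ι] (A : Matrix m ι R) (B : Matrix ι m R) :
    (A * B).det = ∑ r : m → ι, (∏ b, B (r b) b) * (A.submatrix id r).det := by
  simp only [det_apply', mul_apply, prod_univ_sum, Fintype.piFinset_univ, mul_sum,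
    submatrix_apply, id]
  rw [sum_comm]
  refine sum_congr rfl fun r _ => sum_congr rfl fun σ _ => ?_
  rw [prod_mul_distrib]
  ring

theorem det_mul_eq_sum_strictMono {ι : Type*} [Fintype ι] [LinearOrder ι] {n : ℕ} (A : Matrix (Fin n) ι R) (B : Matrix ι (Fin n) R) :
    (A * B).det
      = ∑ s : Fin n → ι with StrictMono s, (A.submatrix id s).det * (B.submatrix s id).det := by
  have h_noninj : ∀ r : Fin n → ι, ¬ Function.Injective r → (A.submatrix id r).det = 0 := by
    intro r hr
    obtain ⟨a, b, hab, hne⟩ := Function.not_injective_iff.mp hr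
    exact det_zero_of_column_eq hne fun k => by simp [hab]
  rw [det_mul_eq_sum_prod_mul_det_submatrix,
    ← sum_filter_of_ne (p := fun r : Fin n → ι => Function.Injective r)
      fun r _ h => not_not.mp fun hr => h (by rw [h_noninj r hr, mul_zero]),
    sum_injective_eq_sum_strictMono_perm]
  refine sum_congr rfl fun s _ => ?_
  have hperm : ∀ σ : Equiv.Perm (Fin n),
      (A.submatrix id (s ∘ σ)).det = Equiv.Perm.sign σ * (A.submatrix id s).det :=
    fun σ => det_permute' σ (A.submatrix id s)
  simp only [hperm, det_apply' (B.submatrix s id), submatrix_apply, id, mul_sum,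
    Function.comp_apply]
  exact sum_congr rfl fun σ _ => by ring

variable {n : ℕ}

theorem det_choose_mul_pow_sub (m q : Fin n → ℕ) (c : R) :
    (of fun k b => ((m b).choose (q k) * c ^ (m b - q k) : R)).det
      = c ^ (∑ b, m b - ∑ b, q b) * (of fun k b => ((m b).choose (q k) : R)).det := by
  simp only [det_apply', of_apply, mul_sum]
  refine sum_congr rfl fun σ _ => ?_
  have hσ := prod_choose_mul_pow_sub m (fun b => q (σ b)) c
  rw [Equiv.sum_comp σ q] at hσ
  rw [hσ]
  ring

/-- The exponents are indexed by `(Fin N)ᵒᵈ` so that the strictly monotone index sequences of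
Cauchy–Binet are the strictly decreasing exponent sequences of bialternants. -/
theorem of_pow_add_eq_mul (y : Fin n → R) (c : R) (m : Fin n → ℕ) {N : ℕ}
    (hm : ∀ b, m b < N) :
    of (fun a b => (y a + c) ^ m b)
      = of (fun a (p : (Fin N)ᵒᵈ) => y a ^ ((OrderDual.ofDual p : Fin N) : ℕ))
        * of (fun (p : (Fin N)ᵒᵈ) b =>
            ((m b).choose (OrderDual.ofDual p : Fin N)
              * c ^ (m b - (OrderDual.ofDual p : Fin N)) : R)) := by
  ext a b
  rw [of_apply, add_pow_eq_sum_fin _ _ (hm b), mul_apply]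
  rfl

theorem det_pow_add_eq_sum_strictMono (y : Fin n → R) (c : R) (m : Fin n → ℕ) {N : ℕ}
    (hm : ∀ b, m b < N) :
    (of fun a b => (y a + c) ^ m b).det
      = ∑ s : Fin n → (Fin N)ᵒᵈ with StrictMono s,
          (of fun a b => y a ^ ((OrderDual.ofDual (s b) : Fin N) : ℕ)).det
            * (c ^ (∑ b, m b - ∑ b, ((OrderDual.ofDual (s b) : Fin N) : ℕ))
              * (of fun k b => ((m b).choose (OrderDual.ofDual (s k) : Fin N) : R)).det) := by
  rw [of_pow_add_eq_mul y c m hm, det_mul_eq_sum_strictMono]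
  exact sum_congr rfl fun s _ => congrArg₂ _ rfl (det_choose_mul_pow_sub m _ c)

theorem det_eq_zero_of_zero_block (M : Matrix (Fin n) (Fin n) R) (l : Fin n)
    (h : ∀ k b, k ≤ l → l ≤ b → M k b = 0) : M.det = 0 := by
  refine (det_apply' M).trans (sum_eq_zero fun σ _ => ?_)
  have hcard : #(univ : Finset (Fin n)) < #((Ici l).map σ.toEmbedding) + #(Iic l) := by
    simp only [card_map, Fin.card_Ici, Fin.card_Iic, card_univ, Fintype.card_fin]
    omega
  obtain ⟨k, hk⟩ :=
    inter_nonempty_of_card_lt_card_add_card (subset_univ _) (subset_univ _) hcard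
  obtain ⟨hkσ, hkl⟩ := mem_inter.mp hk
  obtain ⟨b, hb, rfl⟩ := mem_map.mp hkσ
  rw [prod_eq_zero (f := fun i => M (σ i) i) (mem_univ b) (h _ b (mem_Iic.mp hkl) (mem_Ici.mp hb)),
    mul_zero]

theorem det_choose_eq_zero {m q : Fin n → ℕ} (hm : Antitone m) (hq : Antitone q) {l : Fin n}
    (hl : m l < q l) : (of fun k b => ((m b).choose (q k) : R)).det = 0 :=
  det_eq_zero_of_zero_block _ l fun k b hk hb => by
    rw [of_apply, Nat.choose_eq_zero_of_lt ((hm hb).trans_lt (hl.trans_le (hq hk))),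
      Nat.cast_zero]

end Matrix

section Staircase

open Matrix

variable {n : ℕ}

theorem extF_val {m : Fin n → ℕ} (f : (k : Fin n) → Fin (m k + 1)) (k : Fin n) :
    extF f k = f k := by
  simp [extF]

theorem extF_of_le {m : Fin n → ℕ} (f : (k : Fin n) → Fin (m k + 1)) {k : ℕ} (hk : n ≤ k) :
    extF f k = 0 := by
  simp [extF, not_lt.mpr hk]

theorem antitone_extF {m : Fin n → ℕ} {f : (k : Fin n) → Fin (m k + 1)}
    (hf : Antitone fun k => (f k : ℕ)) : Antitone (extF f) := by
  intro k l hkl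
  by_cases hl : l < n
  · simpa [extF, hl, hkl.trans_lt hl] using
      hf (show (⟨k, hkl.trans_lt hl⟩ : Fin n) ≤ ⟨l, hl⟩ from hkl)
  · simp [extF, hl]

theorem StrictAnti.antitone_add_val {q : Fin n → ℕ} (hq : StrictAnti q) :
    Antitone fun a => q a + a := by
  cases n with
  | zero => exact fun a => a.elim0
  | succ n =>
    refine Fin.antitone_iff_succ_le.mpr fun i => ?_
    have := hq (Fin.castSucc_lt_succ (i := i))
    simp only [Fin.val_succ, Fin.val_castSucc]
    omega

theorem StrictAnti.val_rev_le {q : Fin n → ℕ} (hq : StrictAnti q) (l : Fin n) :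
    (Fin.rev l : ℕ) ≤ q l := by
  have := l.isLt
  have := hq.antitone_add_val (show l ≤ ⟨n - 1, by omega⟩ from Fin.mk_le_mk.mpr (by omega))
  simp only [Fin.val_rev] at this ⊢
  omega

variable {m : Fin n → ℕ}

def stairShift (mu : (k : Fin n) → Fin (m k + 1)) : Fin n → (Fin (∑ k, m k + n))ᵒᵈ :=
  fun l => OrderDual.toDual ⟨mu l + (n - 1 - l), by
    have := (mu l).isLt; have := single_le_sum (fun k _ => Nat.zero_le (m k)) (mem_univ l)
    omega⟩

theorem stairShift_val (mu : (k : Fin n) → Fin (m k + 1)) (l : Fin n) :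
    ((OrderDual.ofDual (stairShift mu l) : Fin (∑ k, m k + n)) : ℕ) = mu l + (n - 1 - l) :=
  rfl

theorem stairShift_injective :
    Function.Injective (stairShift : ((k : Fin n) → Fin (m k + 1)) → _) :=
  fun mu nu h => funext fun l => Fin.ext <| by
    have := congrArg (fun s => ((OrderDual.ofDual (s l) : Fin (∑ k, m k + n)) : ℕ)) h
    simp only [stairShift_val] at this
    omega

theorem strictMono_stairShift {mu : (k : Fin n) → Fin (m k + 1)}
    (hmu : Antitone fun k => (mu k : ℕ)) : StrictMono (stairShift mu) := fun a b hab => by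
  have : (mu b : ℕ) ≤ mu a := hmu hab.le
  have := b.isLt; have := Fin.lt_def.mp hab
  rw [← OrderDual.ofDual_lt_ofDual, Fin.lt_def, stairShift_val, stairShift_val]
  omega

theorem exists_stairShift_eq {s : Fin n → (Fin (∑ k, m k + n))ᵒᵈ} (hs : StrictMono s)
    (hsm : ∀ l, ((OrderDual.ofDual (s l) : Fin (∑ k, m k + n)) : ℕ) ≤ m l + (n - 1 - l)) :
    ∃ mu : (k : Fin n) → Fin (m k + 1), (Antitone fun k => (mu k : ℕ)) ∧ stairShift mu = s := by
  obtain ⟨q, hqs⟩ : ∃ q : Fin n → ℕ,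
      ∀ l, ((OrderDual.ofDual (s l) : Fin (∑ k, m k + n)) : ℕ) = q l := ⟨_, fun _ => rfl⟩
  simp only [hqs] at hsm
  have hq : StrictAnti q := fun a b hab => by
    have := hs hab
    rwa [← OrderDual.ofDual_lt_ofDual, Fin.lt_def, hqs, hqs] at this
  refine ⟨fun l => ⟨q l - (n - 1 - l), by have := hsm l; omega⟩, fun a b hab => ?_,
    funext fun l => ?_⟩
  · have := hq.antitone_add_val hab; have := hq.val_rev_le b; have := b.isLt
    simp only [Fin.val_rev] at *
    omega
  · apply OrderDual.ofDual.injective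
    apply Fin.ext
    have := hq.val_rev_le l
    simp only [Fin.val_rev] at this
    rw [stairShift_val, hqs, Fin.val_mk]
    omega

variable {R : Type*} [CommRing R]

theorem det_pow_add_eq_sum_Edet (d : ℕ → ℕ) (hd : Antitone d) (y : Fin n → R) (c : R) :
    (of fun a b : Fin n => (y a + c) ^ (d b + (n - 1 - b))).det
      = ∑ mu : (k : Fin n) → Fin (d k + 1),
          if Antitone fun k => (mu k : ℕ) then
            (Edet n d (extF mu) : R) * c ^ (∑ k : Fin n, d k - ∑ k, (mu k : ℕ))
              * (of fun a b : Fin n => y a ^ (extF mu b + (n - 1 - b))).det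
          else 0 := by
  set e : Fin n → ℕ := fun b => d b + (n - 1 - b) with he
  have he_anti : Antitone e := fun a b hab => by
    have := hd (Fin.val_le_of_le hab); have := Fin.val_le_of_le hab; simp only [he]; omega
  have heN : ∀ b, e b < ∑ k : Fin n, d k + n := fun b => by
    have := single_le_sum (f := fun k : Fin n => d k) (fun k _ => Nat.zero_le _) (mem_univ b)
    have := b.isLt
    simp only [he]; omega
  rw [det_pow_add_eq_sum_strictMono y c e heN, ← sum_filter,
    ← sum_subset (s₁ := (univ.filter fun mu : (k : Fin n) → Fin (d k + 1) =>
      Antitone fun k => (mu k : ℕ)).image stairShift) ?sub ?zero,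
    sum_image fun _ _ _ _ h => stairShift_injective h]
  case sub =>
    intro s hs
    obtain ⟨mu, hmu, rfl⟩ := mem_image.mp hs
    exact mem_filter.mpr ⟨mem_univ _, strictMono_stairShift (mem_filter.mp hmu).2⟩
  case zero =>
    intro s hs hns
    have hs := (mem_filter.mp hs).2
    suffices (of fun k b => ((e b).choose (OrderDual.ofDual (s k) : Fin _) : R)).det = 0 by
      rw [this, mul_zero, mul_zero]
    by_contra hne
    have hbound : ∀ l, ((OrderDual.ofDual (s l) : Fin _) : ℕ) ≤ e l := fun l =>
      not_lt.mp fun hl => hne (det_choose_eq_zero he_anti (fun a b hab => hs.monotone hab) hl)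
    obtain ⟨mu, hmu, rfl⟩ := exists_stairShift_eq hs hbound
    exact hns (mem_image_of_mem stairShift (mem_filter.mpr ⟨mem_univ _, hmu⟩))
  refine sum_congr rfl fun mu _ => ?_
  have hsum : ∑ b, e b - ∑ b, (mu b + (n - 1 - b)) = ∑ k : Fin n, d k - ∑ k, (mu k : ℕ) := by
    simp only [he, sum_add_distrib]
    omega
  have hE : (Edet n d (extF mu) : R)
      = (of fun k b => ((e b).choose (mu k + (n - 1 - k)) : R)).det := by
    rw [Edet, Int.cast_det, ← det_transpose]
    congr 1
    ext k b
    simp [extF_val, he]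
  simp only [stairShift_val, extF_val, hsum, hE]
  ring

end Staircase

section Schur

open Matrix

variable {R A : Type*} [CommRing R] [CommRing A] [Algebra R A] {n : ℕ}

theorem MvPolynomial.aeval_det_X_pow (f : Fin n → A) (e : Fin n → ℕ) :
    aeval f (of fun a b => (X a : MvPolynomial (Fin n) R) ^ e b).det
      = (of fun a b => f a ^ e b).det := by
  rw [AlgHom.map_det]
  congr 1
  ext a b
  simp

theorem Matrix.det_neg_pow (y : Fin n → A) (e : Fin n → ℕ) :
    (of fun a b => (-y a) ^ e b).det = (-1) ^ (∑ b, e b) * (of fun a b => y a ^ e b).det := by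
  simp only [neg_pow (y _), ← prod_pow_eq_pow_sum]
  exact det_mul_row (fun b => (-1 : A) ^ e b) _

theorem Fin.card_filter_fst_lt_snd (n : ℕ) :
    #(univ.filter fun q : Fin n × Fin n => q.1 < q.2) = ∑ a : Fin n, (n - 1 - a) := by
  rw [card_filter, Fintype.sum_prod_type]
  refine sum_congr rfl fun a _ => ?_
  rw [sum_boole, filter_lt_eq_Ioi, Fin.card_Ioi, Nat.cast_id]

theorem MvPolynomial.aeval_prod_X_sub_X_ne_zero [IsDomain A] {x : Fin n → A}
    (hx : Function.Injective x) :
    aeval x (∏ q ∈ univ.filter (fun q : Fin n × Fin n => q.1 < q.2),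
      (X q.1 - X q.2 : MvPolynomial (Fin n) R)) ≠ 0 := by
  simp only [map_prod, map_sub, aeval_X]
  exact prod_ne_zero_iff.mpr fun q hq => sub_ne_zero.mpr (hx.ne (mem_filter.mp hq).2.ne)

theorem MvPolynomial.aeval_sub_prod_X_sub_X (x : Fin n → A) (c : A) :
    aeval (fun a => c - x a) (∏ q ∈ univ.filter (fun q : Fin n × Fin n => q.1 < q.2),
      (X q.1 - X q.2 : MvPolynomial (Fin n) R))
      = (-1) ^ (∑ a : Fin n, (n - 1 - a)) * aeval x (∏ q ∈ univ.filter
          (fun q : Fin n × Fin n => q.1 < q.2), (X q.1 - X q.2 : MvPolynomial (Fin n) R)) := by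
  simp only [map_prod, ← Fin.card_filter_fst_lt_snd, ← prod_const, ← prod_mul_distrib]
  exact prod_congr rfl fun q _ => by simp only [map_sub, aeval_X]; ring

theorem aeval_sub_eq_sum_Edet [IsDomain A] (S : (ℕ → ℕ) → MvPolynomial (Fin n) R)
    (hS : ∀ nu : ℕ → ℕ, Antitone nu → (∀ k, n ≤ k → nu k = 0) →
      S nu * ∏ q ∈ univ.filter (fun q : Fin n × Fin n => q.1 < q.2), (X q.1 - X q.2)
        = (of fun a b : Fin n => (X a : MvPolynomial (Fin n) R) ^ (nu b + (n - 1 - b))).det)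
    (d : ℕ → ℕ) (hd : Antitone d) (hd0 : ∀ k, n ≤ k → d k = 0) {x : Fin n → A}
    (hx : Function.Injective x) (c : A) :
    aeval (fun a => c - x a) (S d)
      = ∑ mu : (k : Fin n) → Fin (d k + 1),
          if Antitone fun k => (mu k : ℕ) then
            (Edet n d (extF mu) : A) * c ^ (∑ k : Fin n, d k - ∑ k, (mu k : ℕ))
              * (-1) ^ (∑ k, (mu k : ℕ)) * aeval x (S (extF mu))
          else 0 := by
  refine mul_right_cancel₀ (aeval_prod_X_sub_X_ne_zero (R := R) hx)
    (mul_left_cancel₀ (pow_ne_zero (∑ a : Fin n, (n - 1 - a)) (neg_ne_zero.mpr one_ne_zero)) ?_)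
  calc _ = aeval (fun a => c - x a) (S d * ∏ q ∈ univ.filter
          (fun q : Fin n × Fin n => q.1 < q.2), (X q.1 - X q.2)) := by
        rw [map_mul, aeval_sub_prod_X_sub_X]
        ring
    _ = (of fun a b : Fin n => (-x a + c) ^ (d b + (n - 1 - b))).det := by
        rw [hS d hd hd0, aeval_det_X_pow]
        simp only [neg_add_eq_sub]
    _ = _ := by
        rw [det_pow_add_eq_sum_Edet d hd, sum_mul, mul_sum]
        refine sum_congr rfl fun mu _ => ?_
        split_ifs with hmu
        · rw [det_neg_pow, ← aeval_det_X_pow (R := R),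
            ← hS _ (antitone_extF hmu) fun k => extF_of_le mu, map_mul]
          simp only [extF_val, sum_add_distrib, pow_add]
          ring
        · simp

end Schur

theorem two_zpow_sub_eq (j k u : ℕ) (hu : u ≤ k + j) :
    (2 : ℚ) ^ ((u : ℤ) - k) = 2 ^ j * (1 / 2) ^ (k + j - u) := by
  rw [one_div, inv_pow, ← zpow_natCast, ← zpow_natCast, ← zpow_neg, ← zpow_add₀ two_ne_zero]
  congr 1
  push_cast [Nat.cast_sub hu]
  ring

theorem sum_staircase {i j : ℕ} (hij : j ≤ i) :
    ∑ k : Fin i, (j - (k : ℕ)) = j * (j - 1) / 2 + j := by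
  rw [Fin.sum_univ_eq_sum_range (fun k => j - k) i, ← sum_range_add_sum_Ico _ hij,
    sum_eq_zero (s := Ico j i) fun k hk => by simp only [mem_Ico] at hk; omega, add_zero,
    ← sum_range_id, sum_congr rfl fun k hk => (by simp only [mem_range] at hk; omega :
      j - k = (j - 1 - k) + 1), sum_add_distrib, sum_range_reflect (fun k => k) j]
  simp

theorem thom_polynomial_sigma_ij_general (i j : ℕ) (hij : j ≤ i)
    (S : (ℕ → ℕ) → MvPolynomial (Fin i) ℚ)
    -- bialternant characterization of the Schur polynomials (over ℚ):
    (hS : ∀ nu : ℕ → ℕ, Antitone nu → (∀ k, i ≤ k → nu k = 0) →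
      S nu * ∏ q ∈ Finset.univ.filter (fun q : Fin i × Fin i => q.1 < q.2),
          (X q.1 - X q.2)
        = (Matrix.of fun a b : Fin i =>
            (X a : MvPolynomial (Fin i) ℚ) ^ (nu (b : ℕ) + (i - 1 - (b : ℕ)))).det) :
    -- the staircase partition δ, 0-based: δ_{k+1} = j − k
    (2 : MvPolynomial (Option (Fin i)) ℚ) ^ j
        * aeval (fun a : Fin i =>
            (C (1/2 : ℚ) * X none - X (some a) : MvPolynomial (Option (Fin i)) ℚ))
          (S (fun k => j - k))
      = ∑ mu : (k : Fin i) → Fin ((j - (k : ℕ)) + 1),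
          if (∀ a b : Fin i, a ≤ b → ((mu b : ℕ) ≤ (mu a : ℕ))) then
            C ((2 : ℚ) ^ (((∑ k : Fin i, (mu k : ℕ)) : ℤ) - ((j * (j-1) / 2 : ℕ) : ℤ))
                * (Edet i (fun k => j - k) (extF mu) : ℚ)
                * (-1 : ℚ) ^ (∑ k : Fin i, (mu k : ℕ)))
              * (X none : MvPolynomial (Option (Fin i)) ℚ)
                  ^ ((∑ k : Fin i, (j - (k : ℕ))) - ∑ k : Fin i, (mu k : ℕ))
              * aeval (fun a : Fin i => (X (some a) : MvPolynomial (Option (Fin i)) ℚ))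
                  (S (extF mu))
          else 0 := by
  have hδ : Antitone fun k => j - k := fun _ _ h => Nat.sub_le_sub_left h j
  have hx : Function.Injective fun a : Fin i => (X (some a) : MvPolynomial (Option (Fin i)) ℚ) :=
    fun _ _ h => Option.some_injective _ (X_injective h)
  rw [aeval_sub_eq_sum_Edet S hS _ hδ (fun k hk => by omega) hx, mul_sum]
  refine sum_congr rfl fun mu _ => ?_
  by_cases hmu : Antitone fun k => (mu k : ℕ)
  · have hle : ∑ k, (mu k : ℕ) ≤ j * (j - 1) / 2 + j :=
      sum_staircase hij ▸ sum_le_sum fun k _ => Nat.lt_succ_iff.mp (mu k).isLt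
    rw [if_pos hmu, if_pos fun a b h => hmu h, sum_staircase hij, ← Nat.cast_sum,
      two_zpow_sub_eq _ _ _ hle]
    simp only [map_mul, map_pow, map_intCast, map_neg, map_one, map_ofNat, mul_pow]
    ring
  · rw [if_neg hmu, if_neg fun h => hmu fun a b hab => h a b hab, mul_zero]

theorem thom_polynomial_sigma_ij (i j : ℕ) (hj : 1 ≤ j) (hij : j ≤ i)
    (S : (ℕ → ℕ) → MvPolynomial (Fin i) ℚ)
    -- bialternant characterization of the Schur polynomials (over ℚ):
    (hS : ∀ nu : ℕ → ℕ, Antitone nu → (∀ k, i ≤ k → nu k = 0) →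
      S nu * ∏ q ∈ Finset.univ.filter (fun q : Fin i × Fin i => q.1 < q.2),
          (X q.1 - X q.2)
        = (Matrix.of fun a b : Fin i =>
            (X a : MvPolynomial (Fin i) ℚ) ^ (nu (b : ℕ) + (i - 1 - (b : ℕ)))).det) :
    -- the staircase partition δ, 0-based: δ_{k+1} = j − k
    (2 : MvPolynomial (Option (Fin i)) ℚ) ^ j
        * aeval (fun a : Fin i =>
            (C (1/2 : ℚ) * X none - X (some a) : MvPolynomial (Option (Fin i)) ℚ))
          (S (fun k => j - k))
      = ∑ mu : (k : Fin i) → Fin ((j - (k : ℕ)) + 1),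
          if (∀ a b : Fin i, a ≤ b → ((mu b : ℕ) ≤ (mu a : ℕ))) then
            C ((2 : ℚ) ^ (((∑ k : Fin i, (mu k : ℕ)) : ℤ) - ((j * (j-1) / 2 : ℕ) : ℤ))
                * (Edet i (fun k => j - k) (extF mu) : ℚ)
                * (-1 : ℚ) ^ (∑ k : Fin i, (mu k : ℕ)))
              * (X none : MvPolynomial (Option (Fin i)) ℚ)
                  ^ ((∑ k : Fin i, (j - (k : ℕ))) - ∑ k : Fin i, (mu k : ℕ))
              * aeval (fun a : Fin i => (X (some a) : MvPolynomial (Option (Fin i)) ℚ))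
                  (S (extF mu))
          else 0 :=
  thom_polynomial_sigma_ij_general i j hij S hS
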